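/- Parallel associativity of graph insertion: let V₁, V₂, V₃ be pairwise disjoint finite sets, let *₁ and *₂ be two distinct distinguished elements of V₁, and let g₁, g₂, g₃ be simple graphs on V₁, V₂, V₃ respectively. Then (g₁ ∘_{*₁} g₂) ∘_{*₂} g₃ = (g₁ ∘_{*₂} g₃) ∘_{*₁} g₂, as elements of the free module on the set of simple graphs on (V₁ \ {*₁, *₂}) ∪ V₂ ∪ V₃, where insertion is extended bilinearly to linear combinations of graphs. (This is one of the operad axioms in the theorem stating that graphs with insertion form an operad.) -/

import Mathlib

/-!
Common framework: a simple graph on a finite vertex set `V ⊆ α` is a finite set of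
unordered pairs (`Sym2 α`) of distinct elements of `V`.  The insertion
`g₁ ∘_star g₂` is an element of the free `ℚ`-module `Finset (Sym2 α) →₀ ℚ`
on the set of edge sets.
-/

open scoped Classical

variable {α : Type*} [DecidableEq α]

/-- The finite edge set `g` is a simple graph on the vertex set `V`. -/
def IsGraphOn (V : Finset α) (g : Finset (Sym2 α)) : Prop :=
  ∀ e ∈ g, ¬ e.IsDiag ∧ ∀ v ∈ e, v ∈ V

/-- The two endpoints of an unordered pair, as a `Finset`. -/
def sym2Finset : Sym2 α → Finset α :=
  Sym2.lift ⟨fun a b => {a, b}, by intro a b; simp [Finset.pair_comm]⟩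

/-- Neighbours of `x` in the edge set `g`. -/
def nbrs (g : Finset (Sym2 α)) (x : α) : Finset α :=
  (g.biUnion sym2Finset).filter fun v => s(x, v) ∈ g

/-- Remove the vertex `x` (and all incident edges) from the edge set `g`. -/
def delG (g : Finset (Sym2 α)) (x : α) : Finset (Sym2 α) :=
  g.filter fun e => x ∉ e

/-- The edges `{v, f v}` obtained from a reconnection map `f : C → V₂`. -/
def newEdges (C V₂ : Finset α) (f : {v // v ∈ C} → {w // w ∈ V₂}) : Finset (Sym2 α) :=
  Finset.univ.image fun v : {v // v ∈ C} => s(v.1, (f v).1)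

/-- Insertion `g₁ ∘_star g₂` of a graph `g₂` on the vertex set `V₂` into a graph `g₁`:
the sum, over all maps `f` from the neighbours of `star` in `g₁` to `V₂`, of the graph
obtained by deleting `star` from `g₁`, adding `g₂`, and reconnecting along `f`. -/
noncomputable def ins (V₂ : Finset α) (star : α) (g₁ g₂ : Finset (Sym2 α)) :
    Finset (Sym2 α) →₀ ℚ :=
  ∑ f : ({v // v ∈ nbrs g₁ star} → {w // w ∈ V₂}),
    Finsupp.single (delG g₁ star ∪ g₂ ∪ newEdges (nbrs g₁ star) V₂ f) 1

/-- Bilinear extension of the insertion to the free module on graphs. -/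
noncomputable def insM (V₂ : Finset α) (star : α) (x y : Finset (Sym2 α) →₀ ℚ) :
    Finset (Sym2 α) →₀ ℚ :=
  x.sum fun g₁ c₁ => y.sum fun g₂ c₂ => (c₁ * c₂) • ins V₂ star g₁ g₂

/-!
Both sides are double sums over reconnection maps for the neighbours of `star₁` and of `star₂`.
If `star₁` and `star₂` are not adjacent the two insertions act on disjoint sets of edges, so
the double sums agree term by term. If they are adjacent, the edge `{star₁, star₂}` is first
reconnected to an edge `{star₂, b}` or `{star₁, c}` and then, by the second insertion, to an
edge `{b, c}` with `b ∈ V₂`, `c ∈ V₃`; splitting the value at that neighbour off each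
reconnection map makes both sides the same sum over `(f₂, b, f₃, c)`.
-/

open Finsupp (single)

lemma mem_nbrs {g : Finset (Sym2 α)} {x v : α} : v ∈ nbrs g x ↔ s(x, v) ∈ g := by
  refine ⟨fun h => (Finset.mem_filter.1 h).2, fun h => Finset.mem_filter.2 ⟨?_, h⟩⟩
  exact Finset.mem_biUnion.2 ⟨s(x, v), h, by simp [sym2Finset]⟩

lemma nbrs_union (g g' : Finset (Sym2 α)) (x : α) : nbrs (g ∪ g') x = nbrs g x ∪ nbrs g' x := by
  ext v
  simp only [mem_nbrs, Finset.mem_union]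

lemma nbrs_eq_empty_of_forall_notMem {g : Finset (Sym2 α)} {x : α} (h : ∀ e ∈ g, x ∉ e) :
    nbrs g x = ∅ :=
  Finset.eq_empty_of_forall_notMem fun _ hv => h _ (mem_nbrs.1 hv) (Sym2.mem_mk_left _ _)

lemma nbrs_singleton_mk {x a : α} (h : x ≠ a) : nbrs {s(x, a)} x = {a} := by
  ext v
  simp [mem_nbrs, h]

lemma mem_delG {g : Finset (Sym2 α)} {x : α} {e : Sym2 α} : e ∈ delG g x ↔ e ∈ g ∧ x ∉ e :=
  Finset.mem_filter

lemma delG_union (g g' : Finset (Sym2 α)) (x : α) : delG (g ∪ g') x = delG g x ∪ delG g' x :=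
  Finset.filter_union _ _ _

lemma delG_eq_self_of_forall_notMem {g : Finset (Sym2 α)} {x : α} (h : ∀ e ∈ g, x ∉ e) :
    delG g x = g :=
  Finset.filter_true_of_mem h

lemma delG_singleton_mk_self (x a : α) : delG {s(x, a)} x = ∅ :=
  Finset.filter_false_of_mem fun e he => by simp [Finset.mem_singleton.1 he]

lemma delG_comm (g : Finset (Sym2 α)) (x y : α) : delG (delG g x) y = delG (delG g y) x := by
  ext e
  simp only [mem_delG]
  tauto

lemma nbrs_delG {g : Finset (Sym2 α)} {x y : α} (hxy : x ≠ y) :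
    nbrs (delG g x) y = (nbrs g y).erase x := by
  ext v
  simp only [mem_nbrs, mem_delG, Finset.mem_erase, Sym2.mem_iff, not_or]
  exact ⟨fun ⟨h, _, hv⟩ => ⟨Ne.symm hv, h⟩, fun ⟨hv, h⟩ => ⟨h, hxy, Ne.symm hv⟩⟩

lemma IsGraphOn.nbrs_subset {V : Finset α} {g : Finset (Sym2 α)} (hg : IsGraphOn V g) (x : α) :
    nbrs g x ⊆ V :=
  fun v hv => (hg _ (mem_nbrs.1 hv)).2 v (Sym2.mem_mk_right x v)

omit [DecidableEq α] in
lemma IsGraphOn.forall_notMem {V : Finset α} {g : Finset (Sym2 α)} (hg : IsGraphOn V g)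
    {x : α} (hx : x ∉ V) : ∀ e ∈ g, x ∉ e :=
  fun e he hxe => hx ((hg e he).2 x hxe)

lemma mem_newEdges {C V : Finset α} {f : {v // v ∈ C} → {w // w ∈ V}} {e : Sym2 α} :
    e ∈ newEdges C V f ↔ ∃ v : {v // v ∈ C}, s(v.1, (f v).1) = e := by
  simp [newEdges]

lemma notMem_of_mem_newEdges {C V : Finset α} (f : {v // v ∈ C} → {w // w ∈ V}) {y : α}
    (hC : y ∉ C) (hV : y ∉ V) : ∀ e ∈ newEdges C V f, y ∉ e := by
  intro e he hy
  obtain ⟨v, rfl⟩ := mem_newEdges.1 he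
  rcases Sym2.mem_iff.1 hy with rfl | rfl
  exacts [hC v.2, hV (f v).2]

lemma newEdges_piFinsetUnion {a : α} {s V : Finset α} (ha : a ∉ s)
    (f₀ : {v // v ∈ ({a} : Finset α)} → {w // w ∈ V}) (f : {v // v ∈ s} → {w // w ∈ V}) :
    newEdges ({a} ∪ s) V
        (Equiv.piFinsetUnion (fun _ => {w // w ∈ V}) (Finset.disjoint_singleton_left.2 ha) (f₀, f))
      = insert s(a, (f₀ ⟨a, Finset.mem_singleton_self a⟩).1) (newEdges s V f) := by
  ext e
  simp only [mem_newEdges, Finset.mem_insert]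
  constructor
  · rintro ⟨⟨v, hv⟩, rfl⟩
    rcases Finset.mem_union.1 hv with h | h
    · obtain rfl := Finset.mem_singleton.1 h
      exact Or.inl (by rw [Equiv.piFinsetUnion_left _ _ h])
    · exact Or.inr ⟨⟨v, h⟩, by rw [Equiv.piFinsetUnion_right _ _ h]⟩
  · rintro (rfl | ⟨⟨v, hv⟩, rfl⟩)
    · exact ⟨⟨a, Finset.mem_union_left _ (Finset.mem_singleton_self a)⟩,
        by rw [Equiv.piFinsetUnion_left _ _ (Finset.mem_singleton_self a)]⟩
    · exact ⟨⟨v, Finset.mem_union_right _ hv⟩, by rw [Equiv.piFinsetUnion_right _ _ hv]⟩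

lemma sum_newEdges_insert {M : Type*} [AddCommMonoid M] {a : α} {s : Finset α} (ha : a ∉ s)
    (V : Finset α) (F : Finset (Sym2 α) → M) :
    ∑ f : {v // v ∈ insert a s} → {w // w ∈ V}, F (newEdges (insert a s) V f)
      = ∑ p : ({v // v ∈ s} → {w // w ∈ V}) × {w // w ∈ V},
          F (insert s(a, p.2.1) (newEdges s V p.1)) := by
  rw [Finset.insert_eq, ← (Equiv.piFinsetUnion (fun _ => {w // w ∈ V})
    (Finset.disjoint_singleton_left.2 ha)).sum_comp]
  refine Fintype.sum_equiv ((Equiv.prodComm _ _).trans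
    ((Equiv.refl _).prodCongr (Equiv.funUnique _ _))) _ _ fun p => ?_
  rw [newEdges_piFinsetUnion ha]
  rfl

lemma ins_of_nbrs_eq {V C : Finset α} {x : α} {g h : Finset (Sym2 α)} (hC : nbrs g x = C) :
    ins V x g h = ∑ f : {v // v ∈ C} → {w // w ∈ V}, single (delG g x ∪ h ∪ newEdges C V f) 1 := by
  subst hC
  rfl

lemma insM_single_single (V : Finset α) (x : α) (g h : Finset (Sym2 α)) :
    insM V x (single g 1) (single h 1) = ins V x g h := by
  rw [insM, Finsupp.sum_single_index (by simp [Finsupp.sum]), Finsupp.sum_single_index (by simp),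
    mul_one, one_smul]

lemma insM_sum_single_single {ι : Type*} [Fintype ι] (V : Finset α) (x : α)
    (G : ι → Finset (Sym2 α)) (k : Finset (Sym2 α)) :
    insM V x (∑ i, single (G i) 1) (single k 1) = ∑ i, ins V x (G i) k := by
  have hright : ∀ g c, (single k (1 : ℚ)).sum (fun k c' => (c * c') • ins V x g k)
      = c • ins V x g k := fun g c => by rw [Finsupp.sum_single_index (by simp), mul_one]
  simp only [insM, hright]
  rw [← Finsupp.sum_finsetSum_index (by simp) (fun _ _ _ => add_smul _ _ _)]
  exact Fintype.sum_congr _ _ fun i => by rw [Finsupp.sum_single_index (by simp), one_smul]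

lemma insM_insM_single_of_not_adj {V V' : Finset α} {x y : α} {g h k : Finset (Sym2 α)}
    (hxy : x ≠ y) (hyV : y ∉ V) (hy : ∀ e ∈ h, y ∉ e) (hadj : s(x, y) ∉ g) :
    insM V' y (insM V x (single g 1) (single h 1)) (single k 1)
      = ∑ f : {v // v ∈ nbrs g x} → {w // w ∈ V}, ∑ f' : {v // v ∈ nbrs g y} → {w // w ∈ V'},
          single (delG (delG g x) y ∪ h ∪ k ∪ newEdges (nbrs g x) V f
            ∪ newEdges (nbrs g y) V' f') 1 := by
  have hyx : y ∉ nbrs g x := mt mem_nbrs.1 hadj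
  have hxy' : x ∉ nbrs g y := fun hx => hadj (Sym2.eq_swap ▸ mem_nbrs.1 hx)
  have hyf : ∀ f, ∀ e ∈ newEdges (nbrs g x) V f, y ∉ e :=
    fun f => notMem_of_mem_newEdges f hyx hyV
  rw [insM_single_single, ins, insM_sum_single_single]
  refine Fintype.sum_congr _ _ fun f => ?_
  have hN : nbrs (delG g x ∪ h ∪ newEdges (nbrs g x) V f) y = nbrs g y := by
    rw [nbrs_union, nbrs_union, nbrs_delG hxy, nbrs_eq_empty_of_forall_notMem hy,
      nbrs_eq_empty_of_forall_notMem (hyf f), Finset.union_empty, Finset.union_empty,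
      Finset.erase_eq_of_notMem hxy']
  rw [ins_of_nbrs_eq hN]
  refine Fintype.sum_congr _ _ fun f' => ?_
  rw [delG_union, delG_union, delG_eq_self_of_forall_notMem hy,
    delG_eq_self_of_forall_notMem (hyf f)]
  congr 1
  ac_rfl

lemma insM_insM_single_of_adj {V V' : Finset α} {x y : α} {g h k : Finset (Sym2 α)}
    (hxy : x ≠ y) (hyV : y ∉ V) (hV : Disjoint V (nbrs g y)) (hy : ∀ e ∈ h, y ∉ e)
    (hadj : s(x, y) ∈ g) :
    insM V' y (insM V x (single g 1) (single h 1)) (single k 1)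
      = ∑ p : ({v // v ∈ (nbrs g x).erase y} → {w // w ∈ V}) × {w // w ∈ V},
          ∑ q : ({v // v ∈ (nbrs g y).erase x} → {w // w ∈ V'}) × {w // w ∈ V'},
            single (delG (delG g x) y ∪ h ∪ k ∪ newEdges ((nbrs g x).erase y) V p.1
              ∪ newEdges ((nbrs g y).erase x) V' q.1 ∪ {s(p.2.1, q.2.1)}) 1 := by
  have hyx : y ∉ (nbrs g x).erase y := Finset.notMem_erase y _
  have hyf : ∀ f, ∀ e ∈ newEdges ((nbrs g x).erase y) V f, y ∉ e :=
    fun f => notMem_of_mem_newEdges f hyx hyV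
  rw [insM_single_single, ins_of_nbrs_eq (Finset.insert_erase (mem_nbrs.2 hadj)).symm,
    insM_sum_single_single, sum_newEdges_insert hyx V fun t => ins V' y (delG g x ∪ h ∪ t) k]
  refine Fintype.sum_congr _ _ fun p => ?_
  have hb : p.2.1 ∉ (nbrs g y).erase x :=
    fun hb => Finset.disjoint_left.1 hV p.2.2 (Finset.mem_of_mem_erase hb)
  have hN : nbrs (delG g x ∪ h ∪ insert s(y, p.2.1) (newEdges ((nbrs g x).erase y) V p.1)) y
      = insert p.2.1 ((nbrs g y).erase x) := by
    rw [Finset.insert_eq, nbrs_union, nbrs_union, nbrs_union, nbrs_delG hxy,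
      nbrs_eq_empty_of_forall_notMem hy, nbrs_singleton_mk (ne_of_mem_of_not_mem p.2.2 hyV).symm,
      nbrs_eq_empty_of_forall_notMem (hyf _), Finset.union_empty, Finset.union_empty,
      Finset.union_comm, ← Finset.insert_eq]
  rw [ins_of_nbrs_eq hN, sum_newEdges_insert hb V' fun t =>
    single (delG (delG g x ∪ h ∪ insert s(y, p.2.1) (newEdges _ V p.1)) y ∪ k ∪ t) 1]
  refine Fintype.sum_congr _ _ fun q => ?_
  rw [Finset.insert_eq, Finset.insert_eq, delG_union, delG_union, delG_union,
    delG_eq_self_of_forall_notMem hy, delG_singleton_mk_self,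
    delG_eq_self_of_forall_notMem (hyf _), Finset.empty_union]
  congr 1
  ac_rfl

theorem parallel_associativity_of_graph_insertion_general
    (V₁ V₂ V₃ : Finset α) (star₁ star₂ : α)
    (h12 : Disjoint V₁ V₂) (h13 : Disjoint V₁ V₃)
    (hstar₁ : star₁ ∈ V₁) (hstar₂ : star₂ ∈ V₁) (hne : star₁ ≠ star₂)
    (g₁ g₂ g₃ : Finset (Sym2 α))
    (hg₁ : IsGraphOn V₁ g₁) (hg₂ : IsGraphOn V₂ g₂) (hg₃ : IsGraphOn V₃ g₃) :
    insM V₃ star₂ (insM V₂ star₁ (Finsupp.single g₁ 1) (Finsupp.single g₂ 1))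
        (Finsupp.single g₃ 1)
      = insM V₂ star₁ (insM V₃ star₂ (Finsupp.single g₁ 1) (Finsupp.single g₃ 1))
          (Finsupp.single g₂ 1) := by
  have hs₂ : star₂ ∉ V₂ := Finset.disjoint_left.1 h12 hstar₂
  have hs₁ : star₁ ∉ V₃ := Finset.disjoint_left.1 h13 hstar₁
  by_cases hadj : s(star₁, star₂) ∈ g₁
  · rw [insM_insM_single_of_adj hne hs₂ (h12.symm.mono_right (hg₁.nbrs_subset _))
        (hg₂.forall_notMem hs₂) hadj,
      insM_insM_single_of_adj hne.symm hs₁ (h13.symm.mono_right (hg₁.nbrs_subset _))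
        (hg₃.forall_notMem hs₁) (Sym2.eq_swap ▸ hadj), Finset.sum_comm]
    refine Fintype.sum_congr _ _ fun p => Fintype.sum_congr _ _ fun q => ?_
    rw [delG_comm, Sym2.eq_swap (a := q.2.1)]
    congr 1
    ac_rfl
  · rw [insM_insM_single_of_not_adj hne hs₂ (hg₂.forall_notMem hs₂) hadj,
      insM_insM_single_of_not_adj hne.symm hs₁ (hg₃.forall_notMem hs₁)
        (fun h => hadj (Sym2.eq_swap ▸ h)), Finset.sum_comm]
    refine Fintype.sum_congr _ _ fun f => Fintype.sum_congr _ _ fun f' => ?_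
    rw [delG_comm]
    congr 1
    ac_rfl

/-- **Parallel associativity of graph insertion.** -/
theorem parallel_associativity_of_graph_insertion
    (V₁ V₂ V₃ : Finset α) (star₁ star₂ : α)
    (h12 : Disjoint V₁ V₂) (h13 : Disjoint V₁ V₃) (h23 : Disjoint V₂ V₃)
    (hstar₁ : star₁ ∈ V₁) (hstar₂ : star₂ ∈ V₁) (hne : star₁ ≠ star₂)
    (g₁ g₂ g₃ : Finset (Sym2 α))
    (hg₁ : IsGraphOn V₁ g₁) (hg₂ : IsGraphOn V₂ g₂) (hg₃ : IsGraphOn V₃ g₃) :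
    insM V₃ star₂ (insM V₂ star₁ (Finsupp.single g₁ 1) (Finsupp.single g₂ 1))
        (Finsupp.single g₃ 1)
      = insM V₂ star₁ (insM V₃ star₂ (Finsupp.single g₁ 1) (Finsupp.single g₃ 1))
          (Finsupp.single g₂ 1) :=
  parallel_associativity_of_graph_insertion_general V₁ V₂ V₃ star₁ star₂ h12 h13 hstar₁ hstar₂ hne
    g₁ g₂ g₃ hg₁ hg₂ hg₃
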